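/- There is no universal exact masker: for r = dim H_A ≥ 2, there is no unitary U on H_A ⊗ H_B and fixed pure state |b⟩ ∈ H_B such that for all unit vectors |a⟩ ∈ H_A, both partial traces of U(|a⟩⊗|b⟩)(⟨a|⊗⟨b|)U† are independent of |a⟩. -/

import Mathlib

/-!
Reshape `U (a ⊗ b)` into an `s × r` matrix `M` (`Matrix.vec` stacks its columns), so that the
marginals on `A` and `B` are `(Mᴴ M)ᵀ` and `M Mᴴ`. Let `X`, `Y` be the matrices of two orthogonal
basis inputs. Since `a ↦ M` is linear, a `B`-marginal that is the same for every unit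
superposition `α X + β Y` forces `X Yᴴ = 0` (polarization), while the fixed `A`-marginal gives
`Xᴴ X = Yᴴ Y = ρ_Aᵀ`. Hence `(Xᴴ X)² = Xᴴ (X Yᴴ) Y = 0`, so `ρ_A = 0`, contradicting `tr ρ_A = 1`.
-/

open Matrix Complex
open scoped ComplexOrder Classical

noncomputable def matSqrt {n : Type*} [Fintype n] [DecidableEq n]
    (A : Matrix n n ℂ) : Matrix n n ℂ :=
  if h : A.PosSemidef then
    (h.1.eigenvectorUnitary : Matrix n n ℂ) *
      diagonal ((↑) ∘ (fun i => Real.sqrt (h.1.eigenvalues i))) *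
      (star h.1.eigenvectorUnitary : Matrix n n ℂ)
  else 0

noncomputable def traceNorm {m n : Type*} [Fintype m] [Fintype n] [DecidableEq n]
    (A : Matrix m n ℂ) : ℝ :=
  ((matSqrt (Aᴴ * A)).trace).re

noncomputable def frobNorm {m n : Type*} [Fintype m] [Fintype n]
    (A : Matrix m n ℂ) : ℝ :=
  Real.sqrt (((Aᴴ * A).trace).re)

noncomputable def fidelity {n : Type*} [Fintype n] [DecidableEq n]
    (P Q : Matrix n n ℂ) : ℝ :=
  ((matSqrt (matSqrt P * Q * matSqrt P)).trace).re

/-- The outer product |ψ⟩⟨ψ| of a vector. -/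
noncomputable def outerMat {ι : Type*} (ψ : ι → ℂ) : Matrix ι ι ℂ :=
  fun p q => ψ p * (starRingEnd ℂ) (ψ q)

/-- Partial trace over the first (A) factor. -/
noncomputable def ptraceA {r s : ℕ} (ρ : Matrix (Fin r × Fin s) (Fin r × Fin s) ℂ) :
    Matrix (Fin s) (Fin s) ℂ :=
  fun k l => ∑ i : Fin r, ρ (i, k) (i, l)

/-- Partial trace over the second (B) factor. -/
noncomputable def ptraceB {r s : ℕ} (ρ : Matrix (Fin r × Fin s) (Fin r × Fin s) ℂ) :
    Matrix (Fin r) (Fin r) ℂ :=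
  fun i j => ∑ k : Fin s, ρ (i, k) (j, k)

theorem Fintype.sum_norm_sq_smul_single_add_smul_single {ι : Type*} [Fintype ι] [DecidableEq ι]
    {i j : ι} (hij : i ≠ j) (α β : ℂ) :
    ∑ k, ‖(α • Pi.single i 1 + β • Pi.single j 1 : ι → ℂ) k‖ ^ 2 = ‖α‖ ^ 2 + ‖β‖ ^ 2 := by
  rw [Fintype.sum_eq_add i j hij fun k hk => by simp [hk.1, hk.2]]
  simp [hij, hij.symm]

namespace Matrix

variable {m n : Type*}

theorem mulVec_smul_add_smul_mul {ι κ : Type*} [Fintype ι] [Fintype κ]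
    (U : Matrix m (ι × κ) ℂ) (a a' : ι → ℂ) (b : κ → ℂ) (α β : ℂ) :
    U *ᵥ (fun p => (α • a + β • a') p.1 * b p.2)
      = α • U *ᵥ (fun p => a p.1 * b p.2) + β • U *ᵥ (fun p => a' p.1 * b p.2) := by
  rw [← mulVec_smul, ← mulVec_smul, ← mulVec_add]
  congr 1
  funext p
  simp only [Pi.add_apply, Pi.smul_apply, smul_eq_mul]
  ring

theorem ptraceA_outerMat_vec {r s : ℕ} (M : Matrix (Fin s) (Fin r) ℂ) :
    ptraceA (outerMat M.vec) = M * Mᴴ := by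
  ext k l
  simp [ptraceA, outerMat, mul_apply]

theorem ptraceB_outerMat_vec {r s : ℕ} (M : Matrix (Fin s) (Fin r) ℂ) :
    ptraceB (outerMat M.vec) = (Mᴴ * M)ᵀ := by
  ext i j
  simp [ptraceB, outerMat, mul_apply, mul_comm]

theorem smul_add_smul_mul_conjTranspose [Fintype n] (X Y : Matrix m n ℂ) (α β : ℂ) :
    (α • X + β • Y) * (α • X + β • Y)ᴴ = (α * star α) • (X * Xᴴ) + (α * star β) • (X * Yᴴ)
      + (β * star α) • (Y * Xᴴ) + (β * star β) • (Y * Yᴴ) := by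
  rw [conjTranspose_add, conjTranspose_smul, conjTranspose_smul, Matrix.add_mul, Matrix.mul_add,
    Matrix.mul_add]
  simp only [Matrix.smul_mul, Matrix.mul_smul, smul_smul]
  module

theorem mul_conjTranspose_eq_zero_of_forall [Fintype n] (X Y : Matrix m n ℂ) (P : Matrix m m ℂ)
    (h : ∀ α β : ℂ, ‖α‖ ^ 2 + ‖β‖ ^ 2 = 1 → (α • X + β • Y) * (α • X + β • Y)ᴴ = P) :
    X * Yᴴ = 0 := by
  have hX := h 1 0 (by simp)
  have hY := h 0 1 (by simp)
  -- the relative phases `1` and `i` isolate the two halves of the cross term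
  have hre := h (3 / 5) (4 / 5) (by norm_num)
  have him := h (3 / 5) (4 / 5 * I) (by norm_num)
  ext k l
  replace hX := congr($hX k l)
  replace hY := congr($hY k l)
  replace hre := congr($hre k l)
  replace him := congr($him k l)
  simp only [smul_add_smul_mul_conjTranspose, add_apply, smul_apply, smul_eq_mul, star_mul',
    Complex.star_def, conj_I, map_div₀, map_ofNat, map_one, map_zero, zero_apply] at hX hY hre him ⊢
  linear_combination (25 / 24) * (hre - 9 / 25 * hX - 16 / 25 * hY)
    + (25 / 24) * I * (him - 9 / 25 * hX - 16 / 25 * hY)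
    + (((X * Yᴴ) k l - (Y * Xᴴ) k l) / 2 + 2 / 3 * I * (Y * Yᴴ) k l) * I_sq

theorem eq_zero_of_mul_conjTranspose_eq_zero {R : Type*} [Fintype m] [Fintype n] [CommRing R]
    [StarRing R] [PartialOrder R] [StarOrderedRing R] [NoZeroDivisors R] {X Y : Matrix m n R}
    (hXY : X * Yᴴ = 0) (h : Xᴴ * X = Yᴴ * Y) : X = 0 := by
  have hsq : (Xᴴ * X)ᴴ * (Xᴴ * X) = 0 := by
    rw [conjTranspose_mul, conjTranspose_conjTranspose]
    nth_rw 2 [h]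
    simp only [Matrix.mul_assoc, ← Matrix.mul_assoc X, hXY, Matrix.zero_mul, Matrix.mul_zero]
  rwa [conjTranspose_mul_self_eq_zero, conjTranspose_mul_self_eq_zero] at hsq

end Matrix

theorem stmt16_general {r s : ℕ} (hr : 2 ≤ r) :
    ¬ ∃ (U : Matrix (Fin r × Fin s) (Fin r × Fin s) ℂ)
        (_ : U ∈ Matrix.unitaryGroup (Fin r × Fin s) ℂ)
        (b : Fin s → ℂ) (ρA : Matrix (Fin r) (Fin r) ℂ) (ρB : Matrix (Fin s) (Fin s) ℂ),
      (∑ k, ‖b k‖ ^ 2 = 1) ∧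
      ρA.PosSemidef ∧ ρA.trace = 1 ∧ ρB.PosSemidef ∧ ρB.trace = 1 ∧
      ∀ a : Fin r → ℂ, (∑ j, ‖a j‖ ^ 2 = 1) →
        ptraceB (outerMat (U.mulVec (fun p => a p.1 * b p.2))) = ρA ∧
        ptraceA (outerMat (U.mulVec (fun p => a p.1 * b p.2))) = ρB := by
  rintro ⟨U, -, b, ρA, ρB, -, -, hρA, -, -, hmask⟩
  have : Nontrivial (Fin r) := Fin.nontrivial_iff_two_le.2 hr
  obtain ⟨i, j, hij⟩ := exists_pair_ne (Fin r)
  obtain ⟨X, hX⟩ := vec_bijective.surjective (U *ᵥ fun p => (Pi.single i 1 : Fin r → ℂ) p.1 * b p.2)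
  obtain ⟨Y, hY⟩ := vec_bijective.surjective (U *ᵥ fun p => (Pi.single j 1 : Fin r → ℂ) p.1 * b p.2)
  have hsup (α β : ℂ) (h : ‖α‖ ^ 2 + ‖β‖ ^ 2 = 1) :
      ((α • X + β • Y)ᴴ * (α • X + β • Y))ᵀ = ρA ∧
        (α • X + β • Y) * (α • X + β • Y)ᴴ = ρB := by
    have hunit := Fintype.sum_norm_sq_smul_single_add_smul_single hij α β
    rw [← ptraceB_outerMat_vec, ← ptraceA_outerMat_vec, vec_add, vec_smul, vec_smul, hX, hY,
      ← mulVec_smul_add_smul_mul]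
    exact hmask _ (hunit.trans h)
  have hXY : X * Yᴴ = 0 := mul_conjTranspose_eq_zero_of_forall X Y ρB fun α β h => (hsup α β h).2
  have hXX : Xᴴ * X = Yᴴ * Y := transpose_injective <| by
    simpa using (hsup 1 0 (by simp)).1.trans (hsup 0 1 (by simp)).1.symm
  have hX0 : X = 0 := eq_zero_of_mul_conjTranspose_eq_zero hXY hXX
  simp [hX0, ← (hsup 1 0 (by simp)).1] at hρA

/-- No-masking theorem: there is no unitary `U` on `ℂ^r ⊗ ℂ^s` and fixed pure state `b`
such that for every unit vector `a`, both marginals of `U (a ⊗ b)` are fixed density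
matrices `ρA, ρB` independent of `a`. -/
theorem stmt16 {r s : ℕ} (hr : 2 ≤ r) (hs : 2 ≤ s) :
    ¬ ∃ (U : Matrix (Fin r × Fin s) (Fin r × Fin s) ℂ)
        (_ : U ∈ Matrix.unitaryGroup (Fin r × Fin s) ℂ)
        (b : Fin s → ℂ) (ρA : Matrix (Fin r) (Fin r) ℂ) (ρB : Matrix (Fin s) (Fin s) ℂ),
      (∑ k, ‖b k‖ ^ 2 = 1) ∧
      ρA.PosSemidef ∧ ρA.trace = 1 ∧ ρB.PosSemidef ∧ ρB.trace = 1 ∧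
      ∀ a : Fin r → ℂ, (∑ j, ‖a j‖ ^ 2 = 1) →
        ptraceB (outerMat (U.mulVec (fun p => a p.1 * b p.2))) = ρA ∧
        ptraceA (outerMat (U.mulVec (fun p => a p.1 * b p.2))) = ρB :=
  stmt16_general hr
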